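/- arXiv:1906.10265 — 2 statements merged into one kernel-verified Lean document; each statement's English description precedes it below -/
import Mathlib

section
/- If σ is a greedy ordering of E, then for every ordering τ of E the commonality index of σ is at most that of τ, i.e., c(σ) ≤ c(τ); in other words, every greedy ordering achieves the minimum commonality index over all orderings of E. -/
/-!
Fix a position `i` of the greedy ordering `σ` and let `S` be its prefix set. Let `e` be the
element of `S` that comes last in `τ`, say at position `k`. All of `S \ {e}` precedes `e` in `τ`,
so by nonnegativity of `w` the greedy bound `W_σ(i) ≤ ∑_{e' ∈ S \ {e}} w(e, e')` is at most
`W_τ(k) ≤ c(τ)`.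
-/

/-- Effective commonality of position `i` in ordering `σ`:
`W_σ(i) = ∑_{j < i} w(σ i, σ j)`. -/
noncomputable def effComm {E : Type*} {n : ℕ} (w : E → E → ℝ) (σ : Fin n ≃ E)
    (i : Fin n) : ℝ :=
  ∑ j ∈ Finset.Iio i, w (σ i) (σ j)

/-- Commonality index of ordering `σ`: the maximum effective commonality
over all positions (equal to `0` when `n = 0`). -/
noncomputable def commIdx {E : Type*} {n : ℕ} (w : E → E → ℝ) (σ : Fin n ≃ E) : ℝ :=
  ⨆ i : Fin n, effComm w σ i

/-- `σ` is a greedy ordering: for every position `i` and every element `e` of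
the prefix set `S_i = {σ j : j ≤ i}`, we have
`W_σ(i) ≤ ∑_{e' ∈ S_i, e' ≠ e} w(e, e')`. -/
def Greedy {E : Type*} {n : ℕ} [DecidableEq E] (w : E → E → ℝ) (σ : Fin n ≃ E) : Prop :=
  ∀ i : Fin n, ∀ e ∈ (Finset.Iic i).image σ,
    effComm w σ i ≤ ∑ e' ∈ ((Finset.Iic i).image σ).erase e, w e e'

open Finset

section

variable {E : Type*} {n : ℕ}

theorem effComm_le_commIdx (w : E → E → ℝ) (τ : Fin n ≃ E) (k : Fin n) :
    effComm w τ k ≤ commIdx w τ :=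
  le_ciSup (Set.finite_range _).bddAbove k

theorem commIdx_le_of_forall_exists_effComm_le (w : E → E → ℝ) (σ τ : Fin n ≃ E)
    (h : ∀ i, ∃ k, effComm w σ i ≤ effComm w τ k) : commIdx w σ ≤ commIdx w τ := by
  rcases isEmpty_or_nonempty (Fin n) with hn | hn
  · simp [commIdx, Real.iSup_of_isEmpty]
  · refine ciSup_le fun i => ?_
    obtain ⟨k, hk⟩ := h i
    exact hk.trans (effComm_le_commIdx w τ k)

theorem sum_erase_le_effComm [DecidableEq E] (w : E → E → ℝ) (hw : ∀ e e', 0 ≤ w e e')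
    (τ : Fin n ≃ E) {S : Finset E} {e : E} (hlast : ∀ e' ∈ S, τ.symm e' ≤ τ.symm e) :
    ∑ e' ∈ S.erase e, w e e' ≤ effComm w τ (τ.symm e) := by
  have hsub : S.erase e ⊆ (Iio (τ.symm e)).image τ := by
    intro e' he'
    obtain ⟨hne, he'S⟩ := mem_erase.1 he'
    have hlt : τ.symm e' < τ.symm e :=
      (hlast e' he'S).lt_of_ne (τ.symm.injective.ne hne)
    exact mem_image.2 ⟨τ.symm e', mem_Iio.2 hlt, τ.apply_symm_apply e'⟩
  calc ∑ e' ∈ S.erase e, w e e'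
      ≤ ∑ e' ∈ (Iio (τ.symm e)).image τ, w e e' :=
        sum_le_sum_of_subset_of_nonneg hsub fun e' _ _ => hw e e'
    _ = effComm w τ (τ.symm e) := by
        rw [effComm, sum_image fun a _ b _ hab => τ.injective hab, τ.apply_symm_apply]

end

/-- Every greedy ordering achieves the minimum commonality index over all
orderings of `E`. -/
theorem greedy_ordering_minimizes_commIdx
    {E : Type*} [DecidableEq E] {n : ℕ} (w : E → E → ℝ)
    (hw : ∀ e e', 0 ≤ w e e')
    (σ : Fin n ≃ E) (hσ : Greedy w σ) :
    ∀ τ : Fin n ≃ E, commIdx w σ ≤ commIdx w τ := by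
  intro τ
  refine commIdx_le_of_forall_exists_effComm_le w σ τ fun i => ?_
  have hprefix : ((Iic i).image σ).Nonempty := ⟨σ i, mem_image_of_mem σ (mem_Iic.2 le_rfl)⟩
  obtain ⟨e, he, hlast⟩ := ((Iic i).image σ).exists_max_image τ.symm hprefix
  exact ⟨τ.symm e, (hσ i e he).trans (sum_erase_le_effComm w hw τ hlast)⟩
end

section
/- With σ, τ, i_max, j, τ' as above, for every position i with j ≤ i < i_max (the elements shifted down by the exchange move), the effective commonality satisfies W_{τ'}(i) = W_τ(i+1) − w(τ(i+1), τ(j)); in particular, since w is nonnegative, W_{τ'}(i) ≤ W_τ(i+1). -/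
/-!
For `j ≤ i < imax` the exchange move places `τ(i+1)` at position `i`, and the positions before
`i` hold the elements preceding `τ(i+1)` in `τ` except `τ(j)`: positions below `j` are untouched
and positions `j, …, i-1` hold `τ(j+1), …, τ(i)`. So `W_{τ'}(i)` is the sum defining `W_τ(i+1)`
with the single term `w(τ(i+1), τ(j))` removed. The two prefix sets are compared by one
inclusion and equal cardinalities, which avoids building the index bijection explicitly.
-/

open Finset

section
variable {E : Type*} [DecidableEq E] {n : ℕ}

theorem effComm_eq_sum_image (w : E → E → ℝ) (σ : Fin n ≃ E) (i : Fin n) :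
    effComm w σ i = ∑ e ∈ (Iio i).image σ, w (σ i) e := by
  rw [sum_image σ.injective.injOn]
  rfl

theorem effComm_eq_sub_of_image_Iio_eq_erase (w : E → E → ℝ) (σ τ : Fin n ≃ E)
    {i i' j : Fin n} (hσi : σ i = τ i') (hji' : j < i')
    (hprefix : (Iio i).image σ = ((Iio i').image τ).erase (τ j)) :
    effComm w σ i = effComm w τ i' - w (τ i') (τ j) := by
  rw [effComm_eq_sum_image, effComm_eq_sum_image, hσi, hprefix,
    sum_erase_eq_sub (mem_image_of_mem τ (mem_Iio.mpr hji'))]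

theorem image_Iio_eq_erase_of_shift (τ τ' : Fin n ≃ E) {i i' j : Fin n}
    (hi' : (i' : ℕ) = i + 1) (hji : j ≤ i) (hlo : ∀ k, k < j → τ' k = τ k)
    (hmid : ∀ k : Fin n, j ≤ k → ∀ hk : k < i, τ' k = τ ⟨k + 1, by omega⟩) :
    (Iio i).image τ' = ((Iio i').image τ).erase (τ j) := by
  refine eq_of_subset_of_card_le ?_ ?_
  · simp only [subset_iff, mem_image, mem_Iio, mem_erase]
    rintro _ ⟨k, hki, rfl⟩
    rcases lt_or_ge k j with hkj | hjk
    · rw [hlo k hkj]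
      exact ⟨τ.injective.ne hkj.ne, k, by omega, rfl⟩
    · rw [hmid k hjk hki]
      refine ⟨τ.injective.ne fun h => ?_, _, ?_, rfl⟩
      · rw [Fin.ext_iff, Fin.val_mk] at h
        omega
      · rw [Fin.lt_def, hi']
        exact Nat.succ_lt_succ hki
  · rw [card_image_of_injective _ τ'.injective, card_erase_of_mem
      (mem_image_of_mem τ (mem_Iio.mpr (by omega))),
      card_image_of_injective _ τ.injective, Fin.card_Iio, Fin.card_Iio, hi', Nat.add_sub_cancel]

end

theorem effComm_exchange_shifted_general
    {E : Type*} [DecidableEq E] {n : ℕ} (w : E → E → ℝ)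
    (hw : ∀ e e', 0 ≤ w e e')
    (τ τ' : Fin n ≃ E)
    (imax j : Fin n)
    (hτ'_lo : ∀ i : Fin n, i < j → τ' i = τ i)
    (hτ'_mid : ∀ i : Fin n, j ≤ i → ∀ h2 : i < imax,
      τ' i = τ ⟨(i : ℕ) + 1, Nat.lt_of_le_of_lt (Nat.succ_le_of_lt (Fin.lt_def.mp h2)) imax.isLt⟩) :
    ∀ i : Fin n, j ≤ i → ∀ h2 : i < imax,
      effComm w τ' i =
        effComm w τ ⟨(i : ℕ) + 1,
            Nat.lt_of_le_of_lt (Nat.succ_le_of_lt (Fin.lt_def.mp h2)) imax.isLt⟩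
          - w (τ ⟨(i : ℕ) + 1,
                Nat.lt_of_le_of_lt (Nat.succ_le_of_lt (Fin.lt_def.mp h2)) imax.isLt⟩) (τ j)
      ∧ effComm w τ' i ≤
          effComm w τ ⟨(i : ℕ) + 1,
            Nat.lt_of_le_of_lt (Nat.succ_le_of_lt (Fin.lt_def.mp h2)) imax.isLt⟩ := by
  intro i hji h2
  have hprefix := image_Iio_eq_erase_of_shift τ τ' (i' := ⟨i + 1, by omega⟩) rfl hji hτ'_lo
    fun k hjk hk => hτ'_mid k hjk (hk.trans h2)
  have hW := effComm_eq_sub_of_image_Iio_eq_erase w τ' τ (hτ'_mid i hji h2)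
    (Fin.lt_def.mpr (Nat.lt_succ_of_le hji)) hprefix
  exact ⟨hW, hW ▸ sub_le_self _ (hw _ _)⟩

/-- For every position `i` with `j ≤ i < imax` (the elements shifted down by the
exchange move), `W_{τ'}(i) = W_τ(i+1) − w(τ(i+1), τ(j))`; in particular, since `w`
is nonnegative, `W_{τ'}(i) ≤ W_τ(i+1)`. -/
theorem effComm_exchange_shifted
    {E : Type*} [DecidableEq E] {n : ℕ} (w : E → E → ℝ)
    (hw : ∀ e e', 0 ≤ w e e')
    (σ τ τ' : Fin n ≃ E) (hne : σ ≠ τ)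
    (imax j : Fin n)
    (himax_ne : σ imax ≠ τ imax)
    (himax_max : ∀ i : Fin n, imax < i → σ i = τ i)
    (hj : τ j = σ imax)
    (hjlt : j < imax)
    (hτ'_lo : ∀ i : Fin n, i < j → τ' i = τ i)
    (hτ'_hi : ∀ i : Fin n, imax < i → τ' i = τ i)
    (hτ'_mid : ∀ i : Fin n, j ≤ i → ∀ h2 : i < imax,
      τ' i = τ ⟨(i : ℕ) + 1, Nat.lt_of_le_of_lt (Nat.succ_le_of_lt (Fin.lt_def.mp h2)) imax.isLt⟩)
    (hτ'_imax : τ' imax = τ j) :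
    ∀ i : Fin n, j ≤ i → ∀ h2 : i < imax,
      effComm w τ' i =
        effComm w τ ⟨(i : ℕ) + 1,
            Nat.lt_of_le_of_lt (Nat.succ_le_of_lt (Fin.lt_def.mp h2)) imax.isLt⟩
          - w (τ ⟨(i : ℕ) + 1,
                Nat.lt_of_le_of_lt (Nat.succ_le_of_lt (Fin.lt_def.mp h2)) imax.isLt⟩) (τ j)
      ∧ effComm w τ' i ≤
          effComm w τ ⟨(i : ℕ) + 1,
            Nat.lt_of_le_of_lt (Nat.succ_le_of_lt (Fin.lt_def.mp h2)) imax.isLt⟩ :=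
  effComm_exchange_shifted_general w hw τ τ' imax j hτ'_lo hτ'_mid
end
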